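/- Let R be a commutative ring with unit, 𝒞 an R-linear category, Q a labelled quiver with vertices V, and (𝒱, φ) a representation of Q in 𝒞 consistent with the labelling. Let u, v, w ∈ V. Then for all f ∈ R⟨X⟩_{v,w} and g ∈ R⟨X⟩_{u,v}, the product fg lies in R⟨X⟩_{u,w} and φ_{u,w}(fg) = φ_{v,w}(f) ∘ φ_{u,v}(g) as morphisms in Hom_𝒞(𝒱_u, 𝒱_w). -/

import Mathlib

open scoped BigOperators

/-- The free `R`-algebra `R⟨X⟩` on `X`, as the monoid algebra over `R`
of the free monoid `⟨X⟩` of words over `X`. -/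
abbrev FreeAlg (R X : Type*) [CommRing R] := MonoidAlgebra R (FreeMonoid X)

/-- A labelled quiver `Q = (V, E, X, s, t, l)`: a directed multigraph with vertex set `V`,
edge set `E`, source and target maps `s, t : E → V` and labelling `l : E → X`. -/
structure LabelledQuiver (V E X : Type*) where
  src : E → V
  tgt : E → V
  lab : E → X

/-- Paths in a labelled quiver `Q`; `LQPath Q u w` is the type of paths with source `u` and
target `w`.  `nil v` is the empty path at `v`; `cons e p` appends the edge `e` after `p`. -/
inductive LQPath {V E X : Type*} (Q : LabelledQuiver V E X) : V → V → Type _ where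
  | nil (v : V) : LQPath Q v v
  | cons {u : V} (e : E) (p : LQPath Q u (Q.src e)) : LQPath Q u (Q.tgt e)

namespace LQPath
variable {V E X : Type*} {Q : LabelledQuiver V E X}
/-- The label `l(p) = l(eₙ)⋯l(e₁) ∈ ⟨X⟩` of a path; the empty path has label `1`. -/
def label : {u w : V} → LQPath Q u w → FreeMonoid X
  | _, _, .nil _ => 1
  | _, _, .cons e p => FreeMonoid.of (Q.lab e) * p.label
end LQPath

namespace LabelledQuiver

variable {V E X : Type*} (Q : LabelledQuiver V E X)

/-- The set of signatures `σ(m) = {(s(p), t(p)) : p a path in Q with l(p) = m}`. -/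
def sigmaM (m : FreeMonoid X) : Set (V × V) :=
  {vw | ∃ p : LQPath Q vw.1 vw.2, p.label = m}

variable {R : Type*} [CommRing R]

/-- The set of signatures `σ(f) = ⋂_{m ∈ supp(f)} σ(m)` of a polynomial. -/
def sigmaP (f : FreeAlg R X) : Set (V × V) :=
  ⋂ m ∈ (MonoidAlgebra.coeff f : FreeMonoid X →₀ R).support, Q.sigmaM m

/-- `f` is compatible with `Q` if `σ(f) ≠ ∅`. -/
def Compatible (f : FreeAlg R X) : Prop :=
  (Q.sigmaP f).Nonempty

/-- `f` is uniformly compatible with `Q` if it is compatible and all monomials in its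
support have the same set of signatures. -/
def UniformlyCompatible (f : FreeAlg R X) : Prop :=
  Q.Compatible f ∧
    ∀ m ∈ (MonoidAlgebra.coeff f : FreeMonoid X →₀ R).support, ∀ m' ∈ (MonoidAlgebra.coeff f : FreeMonoid X →₀ R).support,
      Q.sigmaM m = Q.sigmaM m'

/-- The set of sources `s(f)` of a polynomial: the projection of `σ(f)` to the first
component. -/
def srcSet (f : FreeAlg R X) : Set V := Prod.fst '' Q.sigmaP f

/-- The set of targets `t(f)` of a polynomial: the projection of `σ(f)` to the second
component. -/
def tgtSet (f : FreeAlg R X) : Set V := Prod.snd '' Q.sigmaP f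

end LabelledQuiver

open CategoryTheory

/-- A representation `(𝒱, φ)` of a labelled quiver `Q` in an `R`-linear category `C`:
a `C`-object `𝒱_v` for each vertex `v` and a morphism `φ(e) ∈ Hom_C(𝒱_{s(e)}, 𝒱_{t(e)})`
for each edge `e`. -/
structure CatQuiverRep (R : Type*) [CommRing R] {V E X : Type*} (Q : LabelledQuiver V E X)
    (C : Type*) [Category C] [Preadditive C] [CategoryTheory.Linear R C] where
  obj : V → C
  map : (e : E) → (obj (Q.src e) ⟶ obj (Q.tgt e))

namespace CatQuiverRep

variable {R : Type*} [CommRing R] {V E X : Type*} {Q : LabelledQuiver V E X}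
  {C : Type*} [Category C] [Preadditive C] [CategoryTheory.Linear R C]

/-- The morphism `φ(eₙ)⋯φ(e₁)` induced by a path; the empty path induces the identity. -/
def pathMap (ρ : CatQuiverRep R Q C) : {u w : V} → LQPath Q u w → (ρ.obj u ⟶ ρ.obj w)
  | _, _, .nil _ => 𝟙 _
  | _, _, .cons e p => ρ.pathMap p ≫ ρ.map e

/-- A representation is consistent with the labelling if any two paths with the same source,
the same target and the same label induce the same morphism. -/
def Consistent (ρ : CatQuiverRep R Q C) : Prop :=
  ∀ (u w : V) (p q : LQPath Q u w), p.label = q.label → ρ.pathMap p = ρ.pathMap q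

/-- The realization `φ_{v,w}(f)` of a polynomial `f` as a morphism in `C`: the `R`-linear
extension of the assignment sending the label of a path from `v` to `w` to the composition of
the morphisms along the path (an arbitrary such path is chosen for each monomial; for a
consistent representation the result does not depend on this choice). -/
noncomputable def realize (ρ : CatQuiverRep R Q C) (v w : V) (f : FreeAlg R X) :
    ρ.obj v ⟶ ρ.obj w :=
  Finsupp.sum (MonoidAlgebra.coeff f : FreeMonoid X →₀ R) fun m c =>
    letI := Classical.propDecidable (∃ p : LQPath Q v w, p.label = m)
    c • (if h : ∃ p : LQPath Q v w, p.label = m then ρ.pathMap h.choose else 0)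

end CatQuiverRep

/-! Both sides are `R`-bilinear in `(f, g)`, so they can be compared monomial by monomial. For
`m ∈ supp f` and `n ∈ supp g` there are paths `p : v → w` labelled `m` and `q : u → v` labelled
`n`; their concatenation is labelled `m * n`, and consistency makes the realization of `m * n` the
composite along it, which is the composite of the realizations of `n` and `m`. -/

namespace LQPath
variable {V E X : Type*} {Q : LabelledQuiver V E X}

def comp : {a b c : V} → LQPath Q b c → LQPath Q a b → LQPath Q a c
  | _, _, _, .nil _, q => q
  | _, _, _, .cons e p, q => .cons e (p.comp q)

theorem label_comp : ∀ {a b c : V} (p : LQPath Q b c) (q : LQPath Q a b),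
    (p.comp q).label = p.label * q.label
  | _, _, _, .nil _, q => by simp [comp, label]
  | _, _, _, .cons e p, q => by simp [comp, label, label_comp p q, mul_assoc]

end LQPath

namespace LabelledQuiver
variable {V E X : Type*} {Q : LabelledQuiver V E X}

theorem mul_mem_sigmaM {u v w : V} {m n : FreeMonoid X} (hm : (v, w) ∈ Q.sigmaM m)
    (hn : (u, v) ∈ Q.sigmaM n) : (u, w) ∈ Q.sigmaM (m * n) := by
  obtain ⟨p, rfl⟩ := hm
  obtain ⟨q, rfl⟩ := hn
  exact ⟨p.comp q, LQPath.label_comp p q⟩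

variable {R : Type*} [CommRing R]

theorem mem_sigmaP {vw : V × V} {f : FreeAlg R X} :
    vw ∈ Q.sigmaP f ↔ ∀ m ∈ f.coeff.support, vw ∈ Q.sigmaM m :=
  Set.mem_iInter₂

theorem mul_mem_sigmaP {u v w : V} {f g : FreeAlg R X} (hf : (v, w) ∈ Q.sigmaP f)
    (hg : (u, v) ∈ Q.sigmaP g) : (u, w) ∈ Q.sigmaP (f * g) := by
  classical
  refine mem_sigmaP.2 fun m hm => ?_
  obtain ⟨a, ha, b, hb, rfl⟩ := Finset.mem_mul.1 (MonoidAlgebra.support_coeff_mul_subset f g hm)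
  exact mul_mem_sigmaM (mem_sigmaP.1 hf a ha) (mem_sigmaP.1 hg b hb)

end LabelledQuiver

namespace CatQuiverRep
variable {R : Type*} [CommRing R] {V E X : Type*} {Q : LabelledQuiver V E X}
  {C : Type*} [Category C] [Preadditive C] [CategoryTheory.Linear R C]
  (ρ : CatQuiverRep R Q C)

theorem pathMap_comp : ∀ {a b c : V} (p : LQPath Q b c) (q : LQPath Q a b),
    ρ.pathMap (p.comp q) = ρ.pathMap q ≫ ρ.pathMap p
  | _, _, _, .nil _, q => by simp [LQPath.comp, pathMap]
  | _, _, _, .cons e p, q => by simp [LQPath.comp, pathMap, pathMap_comp p q]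

noncomputable def realizeMonomial (v w : V) (m : FreeMonoid X) : ρ.obj v ⟶ ρ.obj w :=
  letI := Classical.propDecidable (∃ p : LQPath Q v w, p.label = m)
  if h : ∃ p : LQPath Q v w, p.label = m then ρ.pathMap h.choose else 0

theorem realize_eq_sum (v w : V) (f : FreeAlg R X) :
    ρ.realize v w f = ∑ m ∈ f.coeff.support, f.coeff m • ρ.realizeMonomial v w m :=
  rfl

noncomputable def realizeLinearMap (v w : V) : FreeAlg R X →ₗ[R] (ρ.obj v ⟶ ρ.obj w) :=
  Finsupp.linearCombination R (ρ.realizeMonomial v w) ∘ₗ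
    (MonoidAlgebra.coeffLinearEquiv R).toLinearMap

theorem realizeLinearMap_apply (v w : V) (f : FreeAlg R X) :
    ρ.realizeLinearMap v w f = ρ.realize v w f :=
  Finsupp.linearCombination_apply R _

theorem realize_mul_eq_sum (u w : V) (f g : FreeAlg R X) :
    ρ.realize u w (f * g) = ∑ m ∈ f.coeff.support, ∑ n ∈ g.coeff.support,
      (f.coeff m * g.coeff n) • ρ.realizeMonomial u w (m * n) := by
  rw [← realizeLinearMap_apply, MonoidAlgebra.mul_def, Finsupp.sum, map_sum]
  refine Finset.sum_congr rfl fun m _ => ?_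
  rw [Finsupp.sum, map_sum]
  exact Finset.sum_congr rfl fun n _ => Finsupp.linearCombination_single R _ _

theorem realize_comp_realize_eq_sum (u v w : V) (f g : FreeAlg R X) :
    ρ.realize u v g ≫ ρ.realize v w f = ∑ m ∈ f.coeff.support, ∑ n ∈ g.coeff.support,
      (f.coeff m * g.coeff n) • (ρ.realizeMonomial u v n ≫ ρ.realizeMonomial v w m) := by
  rw [realize_eq_sum, realize_eq_sum, Preadditive.sum_comp, Finset.sum_comm]
  refine Finset.sum_congr rfl fun m _ => ?_
  rw [Preadditive.comp_sum]
  refine Finset.sum_congr rfl fun n _ => ?_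
  rw [Linear.smul_comp, Linear.comp_smul, smul_smul, mul_comm]

variable {ρ}

theorem realizeMonomial_eq_pathMap (hρ : ρ.Consistent) {v w : V} (p : LQPath Q v w) :
    ρ.realizeMonomial v w p.label = ρ.pathMap p := by
  have h : ∃ q : LQPath Q v w, q.label = p.label := ⟨p, rfl⟩
  rw [realizeMonomial, dif_pos h]
  exact hρ v w _ p h.choose_spec

theorem realizeMonomial_mul (hρ : ρ.Consistent) {u v w : V} {m n : FreeMonoid X}
    (hm : (v, w) ∈ Q.sigmaM m) (hn : (u, v) ∈ Q.sigmaM n) :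
    ρ.realizeMonomial u w (m * n) = ρ.realizeMonomial u v n ≫ ρ.realizeMonomial v w m := by
  obtain ⟨p, rfl⟩ := hm
  obtain ⟨q, rfl⟩ := hn
  rw [← LQPath.label_comp, realizeMonomial_eq_pathMap hρ, realizeMonomial_eq_pathMap hρ,
    realizeMonomial_eq_pathMap hρ, pathMap_comp]

end CatQuiverRep

/-- For a consistent representation of `Q` in an `R`-linear category `C` and
vertices `u, v, w`: for all `f ∈ R⟨X⟩_{v,w}` and `g ∈ R⟨X⟩_{u,v}` we have
`f·g ∈ R⟨X⟩_{u,w}` and `φ_{u,w}(f·g) = φ_{v,w}(f) ∘ φ_{u,v}(g)` in `Hom_C(𝒱_u, 𝒱_w)`. -/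
theorem catRealize_mul {R : Type*} [CommRing R] {V E X : Type*} {Q : LabelledQuiver V E X}
    {C : Type*} [Category C] [Preadditive C] [CategoryTheory.Linear R C]
    (ρ : CatQuiverRep R Q C) (hρ : ρ.Consistent) (u v w : V) (f g : FreeAlg R X)
    (hf : (v, w) ∈ Q.sigmaP f) (hg : (u, v) ∈ Q.sigmaP g) :
    (u, w) ∈ Q.sigmaP (f * g) ∧
      ρ.realize u w (f * g) = ρ.realize u v g ≫ ρ.realize v w f := by
  refine ⟨LabelledQuiver.mul_mem_sigmaP hf hg, ?_⟩
  rw [ρ.realize_mul_eq_sum, ρ.realize_comp_realize_eq_sum]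
  refine Finset.sum_congr rfl fun m hm => Finset.sum_congr rfl fun n hn => ?_
  rw [CatQuiverRep.realizeMonomial_mul hρ (LabelledQuiver.mem_sigmaP.1 hf m hm)
    (LabelledQuiver.mem_sigmaP.1 hg n hn)]
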